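/- Let E and F be VH-spaces over the same admissible space Z and S₀(Z) ⊆ S_*(Z) a generating family of continuous increasing *-seminorms. On the space L*_b(E,F,S₀(Z)) of S₀(Z)-bounded adjointable operators T : E → F, the pairing [T₁, T₂] := T₁* ∘ T₂, valued in the *-algebra L*_b(E,S₀(Z)) of S₀(Z)-bounded adjointable operators on E, is a gramian compatible with the right module action (T, A) ↦ T ∘ A: it is linear in the second variable, [T₁,T₂]* = [T₂,T₁], [T,T] is a positive operator on E (i.e., [(T*∘T)x, x]_E ∈ Z⁺ for all x ∈ E), [T,T] = 0 implies T = 0, and [T₁, T₂ ∘ A] = [T₁,T₂] ∘ A for every A ∈ L*_b(E,S₀(Z)); here T₁* ∘ T₂ and T ∘ A are again S₀(Z)-bounded and adjointable. -/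

import Mathlib

open scoped ComplexConjugate Topology

/-- The data of an ordered `*`-space structure on a complex vector space `Z`:
a conjugate-linear involution and a strict convex cone of selfadjoint elements. -/
structure OrderedStarData (Z : Type*) [AddCommGroup Z] [Module ℂ Z] where
  star : Z → Z
  star_add : ∀ x y : Z, star (x + y) = star x + star y
  star_smul : ∀ (c : ℂ) (x : Z), star (c • x) = (starRingEnd ℂ) c • star x
  star_star : ∀ x : Z, star (star x) = x
  cone : Set Z
  cone_zero : (0 : Z) ∈ cone
  cone_add : ∀ x ∈ cone, ∀ y ∈ cone, x + y ∈ cone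
  cone_smul : ∀ r : ℝ, 0 ≤ r → ∀ x ∈ cone, (r : ℂ) • x ∈ cone
  cone_strict : ∀ x ∈ cone, -x ∈ cone → x = 0
  cone_star : ∀ x ∈ cone, star x = x

namespace OrderedStarData

variable {Z : Type*} [AddCommGroup Z] [Module ℂ Z]

/-- A seminorm is increasing when `0 ≤ x ≤ y` implies `p x ≤ p y`. -/
def Increasing (D : OrderedStarData Z) (p : Seminorm ℂ Z) : Prop :=
  ∀ x y : Z, x ∈ D.cone → y - x ∈ D.cone → p x ≤ p y

/-- A `*`-seminorm: `p (z*) = p z`. -/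
def StarSeminorm (D : OrderedStarData Z) (p : Seminorm ℂ Z) : Prop :=
  ∀ z : Z, p (D.star z) = p z

end OrderedStarData

/-- A topologically ordered `*`-space: an ordered `*`-space with a Hausdorff locally convex
topology generated by a family of increasing seminorms, continuous involution and closed cone. -/
structure TopOrderedStarSpace (Z : Type*) [AddCommGroup Z] [Module ℂ Z]
    [TopologicalSpace Z] extends OrderedStarData Z where
  t2 : T2Space Z
  star_continuous : Continuous star
  cone_closed : IsClosed cone
  seminorms_generate : ∃ (ι : Type) (hι : Nonempty ι) (q : ι → Seminorm ℂ Z),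
      (∀ i, ∀ x y : Z, x ∈ cone → y - x ∈ cone → q i x ≤ q i y) ∧
      (letI := hι; WithSeminorms q)

namespace TopOrderedStarSpace

variable {Z : Type*} [AddCommGroup Z] [Module ℂ Z] [TopologicalSpace Z]

/-- Membership in `S_*(Z)`, the set of continuous increasing `*`-seminorms. -/
def MemSStar (D : TopOrderedStarSpace Z) (p : Seminorm ℂ Z) : Prop :=
  Continuous ⇑p ∧ D.toOrderedStarData.Increasing p ∧ D.toOrderedStarData.StarSeminorm p

end TopOrderedStarSpace

/-- The topology of `Z` is generated by the family of seminorms `S`. -/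
def GeneratesTopology {Z : Type*} [AddCommGroup Z] [Module ℂ Z] [TopologicalSpace Z]
    (S : Set (Seminorm ℂ Z)) : Prop :=
  ∃ h : Nonempty ↥S, letI := h; WithSeminorms (fun p : ↥S => (p : Seminorm ℂ Z))

/-- A `Z`-valued gramian (vector valued inner product) on `E`, making `E` a VE-space over `Z`. -/
structure Gramian {Z : Type*} [AddCommGroup Z] [Module ℂ Z] (D : OrderedStarData Z)
    (E : Type*) [AddCommGroup E] [Module ℂ E] where
  inner : E → E → Z
  inner_self_mem : ∀ x : E, inner x x ∈ D.cone
  inner_self_eq_zero : ∀ x : E, inner x x = 0 → x = 0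
  inner_herm : ∀ x y : E, inner x y = D.star (inner y x)
  inner_add_right : ∀ x y₁ y₂ : E, inner x (y₁ + y₂) = inner x y₁ + inner x y₂
  inner_smul_right : ∀ (a : ℂ) (x y : E), inner x (a • y) = a • inner x y

namespace Gramian

variable {Z : Type*} [AddCommGroup Z] [Module ℂ Z] {D : OrderedStarData Z}
  {E : Type*} [AddCommGroup E] [Module ℂ E]
  {F : Type*} [AddCommGroup F] [Module ℂ F]

/-- The seminorm `p̃ x = p ([x,x])^{1/2}` induced on a VE-space by a seminorm on `Z`. -/
noncomputable def tilde (B : Gramian D E) (p : Seminorm ℂ Z) (x : E) : ℝ :=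
  Real.sqrt (p (B.inner x x))

/-- `S` is an adjoint of `T` : `[Tx, y] = [x, Sy]`. -/
def IsAdjoint (BE : Gramian D E) (BF : Gramian D F) (T : E →ₗ[ℂ] F) (S : F →ₗ[ℂ] E) : Prop :=
  ∀ (x : E) (y : F), BF.inner (T x) y = BE.inner x (S y)

/-- `T` is adjointable. -/
def Adjointable (BE : Gramian D E) (BF : Gramian D F) (T : E →ₗ[ℂ] F) : Prop :=
  ∃ S : F →ₗ[ℂ] E, BE.IsAdjoint BF T S

/-- `T` is bounded for the seminorm `p` : `p̃ (Tx) ≤ C p̃ x`. -/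
def BoundedFor (BE : Gramian D E) (BF : Gramian D F) (T : E →ₗ[ℂ] F) (p : Seminorm ℂ Z) : Prop :=
  ∃ C : ℝ, 0 ≤ C ∧ ∀ x : E, BF.tilde p (T x) ≤ C * BE.tilde p x

/-- The operator seminorm `p̄ T`, the infimum of the admissible bounds. -/
noncomputable def opSeminorm (BE : Gramian D E) (BF : Gramian D F) (T : E →ₗ[ℂ] F)
    (p : Seminorm ℂ Z) : ℝ :=
  sInf {C : ℝ | 0 ≤ C ∧ ∀ x : E, BF.tilde p (T x) ≤ C * BE.tilde p x}

/-- The topology of `E` is the one of a topological VE-space: it is generated by the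
seminorms `p̃` for `p ∈ S`. -/
def IsVETopology [TopologicalSpace E] (B : Gramian D E) (S : Set (Seminorm ℂ Z)) : Prop :=
  ∃ h : Nonempty ↥S, letI := h;
    ∃ q : ↥S → Seminorm ℂ E, (∀ (p : ↥S) (x : E), q p x = B.tilde p.1 x) ∧ WithSeminorms q

end Gramian

/-- A barrel: a closed, absorbent, balanced, convex set. -/
def IsBarrel {E : Type*} [AddCommGroup E] [Module ℂ E] [TopologicalSpace E] (s : Set E) : Prop :=
  IsClosed s ∧ Absorbent ℂ s ∧ Balanced ℂ s ∧ Convex ℝ s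

/-- A (complex) topological vector space is barrelled if every barrel is a neighbourhood of `0`. -/
def BarrelledSp (E : Type*) [AddCommGroup E] [Module ℂ E] [TopologicalSpace E] : Prop :=
  ∀ s : Set E, IsBarrel s → s ∈ 𝓝 (0 : E)

/-- A barrel with respect to the topology of a norm function `N`. -/
def IsBarrelWrtNorm {V : Type*} [AddCommGroup V] [Module ℂ V] (N : V → ℝ) (s : Set V) : Prop :=
  (∀ x : V, (∀ ε : ℝ, 0 < ε → ∃ y ∈ s, N (x - y) < ε) → x ∈ s) ∧
  Absorbent ℂ s ∧ Balanced ℂ s ∧ Convex ℝ s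

/-- Barrelledness with respect to the topology of a norm function `N`. -/
def BarrelledWrtNorm {V : Type*} [AddCommGroup V] [Module ℂ V] (N : V → ℝ) : Prop :=
  ∀ s : Set V, IsBarrelWrtNorm N s → ∃ ε : ℝ, 0 < ε ∧ ∀ x : V, N x < ε → x ∈ s

/-- The kernel of a seminorm, as a submodule. -/
def semKer {Z : Type*} [AddCommGroup Z] [Module ℂ Z] (p : Seminorm ℂ Z) : Submodule ℂ Z where
  carrier := {z | p z = 0}
  add_mem' := by
    intro a b ha hb
    simp only [Set.mem_setOf_eq] at ha hb ⊢
    exact le_antisymm ((map_add_le_add p a b).trans (by simp [ha, hb])) (apply_nonneg p _)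
  zero_mem' := map_zero p
  smul_mem' := by
    intro c x hx
    simp only [Set.mem_setOf_eq] at hx ⊢
    rw [map_smul_eq_mul, hx, mul_zero]

/-!
Apart from the boundedness of `T₁* ∘ T₂`, everything is algebra of adjoints. Boundedness reduces
to the adjoint of a `p`-bounded operator being `p`-bounded, which rests on the Cauchy–Schwarz type
inequality `p [u, v] ≤ 4 p̃ u p̃ v` for increasing `p`. Polarization, the parallelogram law and
monotonicity of `p` on the cone give `p [u, v] ≤ 2 (p [u, u] + p [v, v])`; replacing `(u, v)` by
`(s u, s⁻¹ v)` and optimizing over `s > 0` turns the sum into a product. Then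
`p̃ (S z)² = p [T S z, z] ≤ 4 C p̃ (S z) p̃ z`.
-/

open Filter Topology in
lemma le_two_mul_of_forall_le_mul_sq_add_inv_mul_sq {c x y : ℝ} (hx : 0 ≤ x) (hy : 0 ≤ y)
    (h : ∀ t : ℝ, 0 < t → c ≤ t * x ^ 2 + t⁻¹ * y ^ 2) : c ≤ 2 * x * y := by
  have hε : ∀ ε > 0, c ≤ 2 * (x + ε) * (y + ε) := by
    intro ε hε
    have hxε : 0 < x + ε := by positivity
    have hyε : 0 < y + ε := by positivity
    calc c ≤ (y + ε) / (x + ε) * x ^ 2 + ((y + ε) / (x + ε))⁻¹ * y ^ 2 := h _ (by positivity)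
      _ ≤ (y + ε) / (x + ε) * (x + ε) ^ 2 + ((y + ε) / (x + ε))⁻¹ * (y + ε) ^ 2 := by
          gcongr <;> linarith
      _ = 2 * (x + ε) * (y + ε) := by field_simp; ring
  have hlim : Tendsto (fun ε => 2 * (x + ε) * (y + ε)) (𝓝[>] 0) (𝓝 (2 * x * y)) := by
    have hcont : Continuous fun ε : ℝ => 2 * (x + ε) * (y + ε) := by fun_prop
    simpa using (hcont.tendsto 0).mono_left nhdsWithin_le_nhds
  exact ge_of_tendsto hlim (eventually_nhdsWithin_of_forall hε)

namespace Gramian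

variable {Z : Type*} [AddCommGroup Z] [Module ℂ Z] {D : OrderedStarData Z}
  {E : Type*} [AddCommGroup E] [Module ℂ E]
  {F : Type*} [AddCommGroup F] [Module ℂ F]
  {G : Type*} [AddCommGroup G] [Module ℂ G]

lemma star_inner (B : Gramian D E) (x y : E) : D.star (B.inner x y) = B.inner y x := by
  rw [B.inner_herm x y, D.star_star]

lemma inner_add_left (B : Gramian D E) (x₁ x₂ y : E) :
    B.inner (x₁ + x₂) y = B.inner x₁ y + B.inner x₂ y := by
  rw [B.inner_herm, B.inner_add_right, D.star_add, B.star_inner, B.star_inner]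

lemma inner_smul_left (B : Gramian D E) (a : ℂ) (x y : E) :
    B.inner (a • x) y = (starRingEnd ℂ) a • B.inner x y := by
  rw [B.inner_herm, B.inner_smul_right, D.star_smul, B.star_inner]

lemma inner_zero_right (B : Gramian D E) (x : E) : B.inner x 0 = 0 := by
  simpa using B.inner_smul_right 0 x 0

lemma inner_smul_self (B : Gramian D E) (a : ℂ) (x : E) :
    B.inner (a • x) (a • x) = ((starRingEnd ℂ) a * a) • B.inner x x := by
  rw [inner_smul_left, inner_smul_right, smul_smul]

lemma inner_neg_right (B : Gramian D E) (x y : E) : B.inner x (-y) = -B.inner x y := by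
  simpa using B.inner_smul_right (-1) x y

lemma inner_neg_left (B : Gramian D E) (x y : E) : B.inner (-x) y = -B.inner x y := by
  simpa using B.inner_smul_left (-1) x y

lemma inner_neg_self (B : Gramian D E) (x : E) : B.inner (-x) (-x) = B.inner x x := by
  rw [inner_neg_left, inner_neg_right, neg_neg]

lemma inner_add_self_add_inner_sub_self (B : Gramian D E) (x y : E) :
    B.inner (x + y) (x + y) + B.inner (x - y) (x - y) = (2 : ℂ) • (B.inner x x + B.inner y y) := by
  simp only [sub_eq_add_neg, inner_add_left, inner_add_right, inner_neg_left, inner_neg_right]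
  module

lemma polarization (B : Gramian D E) (u v : E) :
    (4 : ℂ) • B.inner u v = B.inner (u + v) (u + v) - B.inner (u + -v) (u + -v)
      + Complex.I • B.inner (Complex.I • u + v) (Complex.I • u + v)
      - Complex.I • B.inner (Complex.I • u + -v) (Complex.I • u + -v) := by
  simp only [inner_add_left, inner_add_right, inner_neg_left, inner_neg_right, inner_smul_left,
    inner_smul_right, Complex.conj_I, smul_add, smul_neg, neg_smul, smul_smul, Complex.I_mul_I]
  module

lemma tilde_nonneg (B : Gramian D E) (p : Seminorm ℂ Z) (x : E) : 0 ≤ B.tilde p x :=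
  Real.sqrt_nonneg _

lemma tilde_sq (B : Gramian D E) (p : Seminorm ℂ Z) (x : E) :
    B.tilde p x ^ 2 = p (B.inner x x) :=
  Real.sq_sqrt (apply_nonneg p _)

variable {p : Seminorm ℂ Z}

lemma apply_inner_add_self_le (B : Gramian D E) (hp : D.Increasing p) (x y : E) :
    p (B.inner (x + y) (x + y)) ≤ 2 * (p (B.inner x x) + p (B.inner y y)) :=
  calc p (B.inner (x + y) (x + y))
      ≤ p (B.inner (x + y) (x + y) + B.inner (x - y) (x - y)) :=
        hp _ _ (B.inner_self_mem _) (by simpa using B.inner_self_mem (x - y))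
    _ ≤ 2 * (p (B.inner x x) + p (B.inner y y)) := by
        rw [inner_add_self_add_inner_sub_self, map_smul_eq_mul, Complex.norm_ofNat]
        gcongr
        exact map_add_le_add p _ _

lemma apply_inner_le_two_mul_add (B : Gramian D E) (hp : D.Increasing p) (u v : E) :
    p (B.inner u v) ≤ 2 * (p (B.inner u u) + p (B.inner v v)) := by
  have hI : B.inner (Complex.I • u) (Complex.I • u) = B.inner u u := by
    simp [inner_smul_self, Complex.conj_I]
  have hbound : ∀ x y : E, B.inner x x = B.inner u u → B.inner y y = B.inner v v →
      p (B.inner (x + y) (x + y)) ≤ 2 * (p (B.inner u u) + p (B.inner v v)) :=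
    fun x y hx hy => hx ▸ hy ▸ B.apply_inner_add_self_le hp x y
  have h₁ := hbound u v rfl rfl
  have h₂ := hbound u (-v) rfl (B.inner_neg_self v)
  have h₃ := hbound (Complex.I • u) v hI rfl
  have h₄ := hbound (Complex.I • u) (-v) hI (B.inner_neg_self v)
  have hsum : p (B.inner u v) * 4 ≤ p (B.inner (u + v) (u + v)) + p (B.inner (u + -v) (u + -v))
      + p (B.inner (Complex.I • u + v) (Complex.I • u + v))
      + p (B.inner (Complex.I • u + -v) (Complex.I • u + -v)) :=
    calc p (B.inner u v) * 4 = p ((4 : ℂ) • B.inner u v) := by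
          rw [map_smul_eq_mul, Complex.norm_ofNat, mul_comm]
      _ ≤ p (B.inner (u + v) (u + v)) + p (B.inner (u + -v) (u + -v))
          + p (Complex.I • B.inner (Complex.I • u + v) (Complex.I • u + v))
          + p (Complex.I • B.inner (Complex.I • u + -v) (Complex.I • u + -v)) := by
          rw [B.polarization]
          refine (map_sub_le_add p _ _).trans (add_le_add ((map_add_le_add p _ _).trans
            (add_le_add (map_sub_le_add p _ _) le_rfl)) le_rfl)
      _ = _ := by simp only [map_smul_eq_mul, Complex.norm_I, one_mul]
  linarith

lemma apply_inner_le_four_mul_tilde (B : Gramian D E) (hp : D.Increasing p) (u v : E) :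
    p (B.inner u v) ≤ 4 * B.tilde p u * B.tilde p v := by
  suffices p (B.inner u v) / 2 ≤ 2 * B.tilde p u * B.tilde p v by linarith
  refine le_two_mul_of_forall_le_mul_sq_add_inv_mul_sq (B.tilde_nonneg p u) (B.tilde_nonneg p v)
    fun t ht => ?_
  -- rescale `u ↦ √t • u`, `v ↦ (√t)⁻¹ • v`, which leaves `[u, v]` unchanged
  set s : ℝ := Real.sqrt t
  have hs : 0 < s := Real.sqrt_pos.mpr ht
  have hst : s * s = t := Real.mul_self_sqrt ht.le
  have h := B.apply_inner_le_two_mul_add hp ((s : ℂ) • u) (((s⁻¹ : ℝ) : ℂ) • v)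
  simp only [inner_smul_left, inner_smul_right, smul_smul, Complex.conj_ofReal,
    ← Complex.ofReal_mul, map_smul_eq_mul, Complex.norm_real, Real.norm_eq_abs] at h
  rw [inv_mul_cancel₀ hs.ne', abs_one, one_mul, ← mul_inv, hst, abs_of_pos ht,
    abs_of_pos (inv_pos.mpr ht)] at h
  rw [tilde_sq, tilde_sq]
  linarith

variable {BE : Gramian D E} {BF : Gramian D F} {BG : Gramian D G}

lemma IsAdjoint.symm {T : E →ₗ[ℂ] F} {S : F →ₗ[ℂ] E} (h : BE.IsAdjoint BF T S) :
    BF.IsAdjoint BE S T := fun y x => by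
  rw [← BE.star_inner, ← h, BF.star_inner]

lemma IsAdjoint.comp {A : E →ₗ[ℂ] F} {A' : F →ₗ[ℂ] E} {T : F →ₗ[ℂ] G} {T' : G →ₗ[ℂ] F}
    (hA : BE.IsAdjoint BF A A') (hT : BF.IsAdjoint BG T T') :
    BE.IsAdjoint BG (T ∘ₗ A) (A' ∘ₗ T') := fun x y => by
  rw [LinearMap.comp_apply, LinearMap.comp_apply, hT, hA]

lemma IsAdjoint.inner_comp_self_mem {T : E →ₗ[ℂ] F} {S : F →ₗ[ℂ] E} (h : BE.IsAdjoint BF T S)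
    (x : E) : BE.inner ((S ∘ₗ T) x) x ∈ D.cone := by
  rw [LinearMap.comp_apply, h.symm]
  exact BF.inner_self_mem _

lemma IsAdjoint.eq_zero_of_comp_eq_zero {T : E →ₗ[ℂ] F} {S : F →ₗ[ℂ] E}
    (h : BE.IsAdjoint BF T S) (hST : S ∘ₗ T = 0) : T = 0 := by
  ext x
  apply BF.inner_self_eq_zero
  rw [h, ← LinearMap.comp_apply, hST, LinearMap.zero_apply, inner_zero_right]

lemma BoundedFor.comp {A : E →ₗ[ℂ] F} {T : F →ₗ[ℂ] G} (hT : BF.BoundedFor BG T p)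
    (hA : BE.BoundedFor BF A p) : BE.BoundedFor BG (T ∘ₗ A) p := by
  obtain ⟨C, hC, hTC⟩ := hT
  obtain ⟨C', hC', hAC'⟩ := hA
  refine ⟨C * C', mul_nonneg hC hC', fun x => ?_⟩
  calc BG.tilde p (T (A x)) ≤ C * BF.tilde p (A x) := hTC (A x)
    _ ≤ C * (C' * BE.tilde p x) := by gcongr; exact hAC' x
    _ = C * C' * BE.tilde p x := by ring

lemma IsAdjoint.boundedFor_adjoint (hp : D.Increasing p) {T : E →ₗ[ℂ] F} {S : F →ₗ[ℂ] E}
    (h : BE.IsAdjoint BF T S) (hT : BE.BoundedFor BF T p) : BF.BoundedFor BE S p := by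
  obtain ⟨C, hC, hTC⟩ := hT
  refine ⟨4 * C, by positivity, fun z => ?_⟩
  have hsq : BE.tilde p (S z) * BE.tilde p (S z) ≤ BE.tilde p (S z) * (4 * C * BF.tilde p z) :=
    calc BE.tilde p (S z) * BE.tilde p (S z) = p (BF.inner (T (S z)) z) := by
          rw [← sq, tilde_sq, h]
      _ ≤ 4 * BF.tilde p (T (S z)) * BF.tilde p z := BF.apply_inner_le_four_mul_tilde hp _ _
      _ ≤ 4 * (C * BE.tilde p (S z)) * BF.tilde p z := by
          gcongr
          · exact BF.tilde_nonneg p z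
          · exact hTC (S z)
      _ = BE.tilde p (S z) * (4 * C * BF.tilde p z) := by ring
  rcases (BE.tilde_nonneg p (S z)).eq_or_lt with h0 | hpos
  · rw [← h0]
    exact mul_nonneg (by positivity) (BF.tilde_nonneg p z)
  · exact le_of_mul_le_mul_left hsq hpos

end Gramian

theorem statement6_general {Z E F : Type*} [AddCommGroup Z] [Module ℂ Z] [UniformSpace Z]
    [AddCommGroup E] [Module ℂ E]
    [AddCommGroup F] [Module ℂ F]
    (D : TopOrderedStarSpace Z)
    (BE : Gramian D.toOrderedStarData E) (BF : Gramian D.toOrderedStarData F)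
    (S₀ : Set (Seminorm ℂ Z)) (hS₀ : ∀ p ∈ S₀, D.MemSStar p) :
    -- the pairing `[T₁,T₂] = T₁* ∘ T₂` stays in the bounded adjointable operators of `E`
    (∀ (T₁ T₂ : E →ₗ[ℂ] F) (S₁ : F →ₗ[ℂ] E), BE.IsAdjoint BF T₁ S₁ →
      BE.Adjointable BF T₂ →
      (∀ p ∈ S₀, BE.BoundedFor BF T₁ p) → (∀ p ∈ S₀, BE.BoundedFor BF T₂ p) →
      BE.Adjointable BE (S₁ ∘ₗ T₂) ∧ (∀ p ∈ S₀, BE.BoundedFor BE (S₁ ∘ₗ T₂) p)) ∧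
    -- the right module action stays in the bounded adjointable operators `E → F`
    (∀ (T : E →ₗ[ℂ] F) (A : E →ₗ[ℂ] E), BE.Adjointable BF T → BE.Adjointable BE A →
      (∀ p ∈ S₀, BE.BoundedFor BF T p) → (∀ p ∈ S₀, BE.BoundedFor BE A p) →
      BE.Adjointable BF (T ∘ₗ A) ∧ (∀ p ∈ S₀, BE.BoundedFor BF (T ∘ₗ A) p)) ∧
    -- linearity in the second variable
    (∀ (T₂ T₃ : E →ₗ[ℂ] F) (S₁ : F →ₗ[ℂ] E) (a b : ℂ),
      S₁ ∘ₗ (a • T₂ + b • T₃) = a • (S₁ ∘ₗ T₂) + b • (S₁ ∘ₗ T₃)) ∧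
    -- hermitian symmetry : `[T₁,T₂]* = [T₂,T₁]`
    (∀ (T₁ T₂ : E →ₗ[ℂ] F) (S₁ S₂ : F →ₗ[ℂ] E), BE.IsAdjoint BF T₁ S₁ →
      BE.IsAdjoint BF T₂ S₂ → BE.IsAdjoint BE (S₁ ∘ₗ T₂) (S₂ ∘ₗ T₁)) ∧
    -- positivity : `[T,T]` is a positive operator on `E`
    (∀ (T : E →ₗ[ℂ] F) (S : F →ₗ[ℂ] E), BE.IsAdjoint BF T S →
      ∀ x : E, BE.inner ((S ∘ₗ T) x) x ∈ D.cone) ∧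
    -- strict positivity : `[T,T] = 0` implies `T = 0`
    (∀ (T : E →ₗ[ℂ] F) (S : F →ₗ[ℂ] E), BE.IsAdjoint BF T S →
      (∀ p ∈ S₀, BE.BoundedFor BF T p) → S ∘ₗ T = 0 → T = 0) ∧
    -- compatibility with the module action : `[T₁, T₂ ∘ A] = [T₁,T₂] ∘ A`
    (∀ (T₂ : E →ₗ[ℂ] F) (S₁ : F →ₗ[ℂ] E) (A : E →ₗ[ℂ] E),
      S₁ ∘ₗ (T₂ ∘ₗ A) = (S₁ ∘ₗ T₂) ∘ₗ A) := by
  refine ⟨?_, ?_, ?_, fun T₁ T₂ S₁ S₂ h₁ h₂ => h₂.comp h₁.symm,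
    fun T S h => h.inner_comp_self_mem, fun T S h _ => h.eq_zero_of_comp_eq_zero,
    fun T₂ S₁ A => LinearMap.comp_assoc A T₂ S₁⟩
  · rintro T₁ T₂ S₁ h₁ ⟨S₂, h₂⟩ hb₁ hb₂
    exact ⟨⟨S₂ ∘ₗ T₁, h₂.comp h₁.symm⟩,
      fun p hp => (h₁.boundedFor_adjoint (hS₀ p hp).2.1 (hb₁ p hp)).comp (hb₂ p hp)⟩
  · rintro T A ⟨S, hS⟩ ⟨A', hA'⟩ hbT hbA
    exact ⟨⟨A' ∘ₗ S, hA'.comp hS⟩, fun p hp => (hbT p hp).comp (hbA p hp)⟩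
  · intro T₂ T₃ S₁ a b
    rw [LinearMap.comp_add, LinearMap.comp_smul, LinearMap.comp_smul]

/-- For VH-spaces `E`, `F` over the same admissible space, the space of
`S₀`-bounded adjointable operators `E → F` is a (locally Hilbert `C*`-) module over the
bounded adjointable operators of `E`, with the gramian `[T₁, T₂] = T₁* ∘ T₂`. -/
theorem statement6 {Z E F : Type*} [AddCommGroup Z] [Module ℂ Z] [UniformSpace Z]
    [IsUniformAddGroup Z] [CompleteSpace Z]
    [AddCommGroup E] [Module ℂ E] [UniformSpace E] [IsUniformAddGroup E] [CompleteSpace E]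
    [AddCommGroup F] [Module ℂ F] [UniformSpace F] [IsUniformAddGroup F] [CompleteSpace F]
    (D : TopOrderedStarSpace Z)
    (BE : Gramian D.toOrderedStarData E) (BF : Gramian D.toOrderedStarData F)
    (S₀ : Set (Seminorm ℂ Z)) (hS₀ : ∀ p ∈ S₀, D.MemSStar p)
    (hS₀gen : GeneratesTopology S₀)
    (hE : BE.IsVETopology S₀) (hF : BF.IsVETopology S₀) :
    -- the pairing `[T₁,T₂] = T₁* ∘ T₂` stays in the bounded adjointable operators of `E`
    (∀ (T₁ T₂ : E →ₗ[ℂ] F) (S₁ : F →ₗ[ℂ] E), BE.IsAdjoint BF T₁ S₁ →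
      BE.Adjointable BF T₂ →
      (∀ p ∈ S₀, BE.BoundedFor BF T₁ p) → (∀ p ∈ S₀, BE.BoundedFor BF T₂ p) →
      BE.Adjointable BE (S₁ ∘ₗ T₂) ∧ (∀ p ∈ S₀, BE.BoundedFor BE (S₁ ∘ₗ T₂) p)) ∧
    -- the right module action stays in the bounded adjointable operators `E → F`
    (∀ (T : E →ₗ[ℂ] F) (A : E →ₗ[ℂ] E), BE.Adjointable BF T → BE.Adjointable BE A →
      (∀ p ∈ S₀, BE.BoundedFor BF T p) → (∀ p ∈ S₀, BE.BoundedFor BE A p) →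
      BE.Adjointable BF (T ∘ₗ A) ∧ (∀ p ∈ S₀, BE.BoundedFor BF (T ∘ₗ A) p)) ∧
    -- linearity in the second variable
    (∀ (T₂ T₃ : E →ₗ[ℂ] F) (S₁ : F →ₗ[ℂ] E) (a b : ℂ),
      S₁ ∘ₗ (a • T₂ + b • T₃) = a • (S₁ ∘ₗ T₂) + b • (S₁ ∘ₗ T₃)) ∧
    -- hermitian symmetry : `[T₁,T₂]* = [T₂,T₁]`
    (∀ (T₁ T₂ : E →ₗ[ℂ] F) (S₁ S₂ : F →ₗ[ℂ] E), BE.IsAdjoint BF T₁ S₁ →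
      BE.IsAdjoint BF T₂ S₂ → BE.IsAdjoint BE (S₁ ∘ₗ T₂) (S₂ ∘ₗ T₁)) ∧
    -- positivity : `[T,T]` is a positive operator on `E`
    (∀ (T : E →ₗ[ℂ] F) (S : F →ₗ[ℂ] E), BE.IsAdjoint BF T S →
      ∀ x : E, BE.inner ((S ∘ₗ T) x) x ∈ D.cone) ∧
    -- strict positivity : `[T,T] = 0` implies `T = 0`
    (∀ (T : E →ₗ[ℂ] F) (S : F →ₗ[ℂ] E), BE.IsAdjoint BF T S →
      (∀ p ∈ S₀, BE.BoundedFor BF T p) → S ∘ₗ T = 0 → T = 0) ∧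
    -- compatibility with the module action : `[T₁, T₂ ∘ A] = [T₁,T₂] ∘ A`
    (∀ (T₂ : E →ₗ[ℂ] F) (S₁ : F →ₗ[ℂ] E) (A : E →ₗ[ℂ] E),
      S₁ ∘ₗ (T₂ ∘ₗ A) = (S₁ ∘ₗ T₂) ∘ₗ A) :=
  statement6_general D BE BF S₀ hS₀
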